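/- arXiv:2305.03106 — 2 statements merged into one kernel-verified Lean document; each statement's English description precedes it below -/
import Mathlib

section
/- Let N be a binary phylogenetic network. The minimum number of leaf additions needed to make N tree-child equals the number of omnians of N. -/
namespace PhyloNet

/-- A binary phylogenetic network, encoded on vertex set `verts ⊆ ℕ`. -/
structure Network where
  verts : Finset ℕ
  arc : ℕ → ℕ → Bool
  root : ℕ
  root_mem : root ∈ verts
  arc_mem : ∀ u v : ℕ, arc u v = true → u ∈ verts ∧ v ∈ verts
  acyclic : ∀ v : ℕ, ¬ Relation.TransGen (fun a b : ℕ => arc a b = true) v v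
  root_indeg : (verts.filter fun u => arc u root = true).card = 0
  root_outdeg : (verts.filter fun w => arc root w = true).card = 1
  nonroot_deg : ∀ v ∈ verts, v ≠ root →
    ((verts.filter fun u => arc u v = true).card = 1 ∧
      (verts.filter fun w => arc v w = true).card = 2) ∨
    ((verts.filter fun u => arc u v = true).card = 2 ∧
      (verts.filter fun w => arc v w = true).card = 1) ∨
    ((verts.filter fun u => arc u v = true).card = 1 ∧
      (verts.filter fun w => arc v w = true).card = 0)

def inDeg (N : Network) (v : ℕ) : ℕ := (N.verts.filter fun u => N.arc u v = true).card

def outDeg (N : Network) (v : ℕ) : ℕ := (N.verts.filter fun w => N.arc v w = true).card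

def IsLeaf (N : Network) (v : ℕ) : Prop := v ∈ N.verts ∧ inDeg N v = 1 ∧ outDeg N v = 0

def IsRet (N : Network) (v : ℕ) : Prop := v ∈ N.verts ∧ inDeg N v = 2

def IsTreeVert (N : Network) (v : ℕ) : Prop := v ∈ N.verts ∧ inDeg N v = 1 ∧ outDeg N v = 2

def IsInternal (N : Network) (v : ℕ) : Prop := v ∈ N.verts ∧ v ≠ N.root ∧ ¬ IsLeaf N v

def IsTree (N : Network) : Prop := ∀ v : ℕ, ¬ IsRet N v

noncomputable def retCount (N : Network) : ℕ := {v : ℕ | IsRet N v}.ncard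

/-- Tree-child: every non-leaf vertex has a child that is a tree vertex or a leaf. -/
def IsTreeChild (N : Network) : Prop :=
  ∀ v ∈ N.verts, ¬ IsLeaf N v → ∃ w : ℕ, N.arc v w = true ∧ (IsTreeVert N w ∨ IsLeaf N w)

/-- An omnian: an internal vertex all of whose children are reticulations. -/
def IsOmnian (N : Network) (v : ℕ) : Prop :=
  IsInternal N v ∧ ∀ w : ℕ, N.arc v w = true → IsRet N w

noncomputable def omnianCount (N : Network) : ℕ := {v : ℕ | IsOmnian N v}.ncard

/-- `N'` is obtained from `N` by adding a leaf to the arc `uv`: the arc is subdivided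
by a fresh vertex `w`, and a fresh leaf `x` is attached to `w`. -/
def IsLeafAdditionOn (N N' : Network) (u v : ℕ) : Prop :=
  N.arc u v = true ∧ ∃ w x : ℕ, w ∉ N.verts ∧ x ∉ N.verts ∧ w ≠ x ∧
    N'.verts = insert w (insert x N.verts) ∧ N'.root = N.root ∧
    ∀ a b : ℕ, (N'.arc a b = true ↔
      ((N.arc a b = true ∧ ¬ (a = u ∧ b = v)) ∨ (a = u ∧ b = w) ∨
        (a = w ∧ b = v) ∨ (a = w ∧ b = x)))

def IsLeafAddition (N N' : Network) : Prop := ∃ u v : ℕ, IsLeafAdditionOn N N' u v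

/-- `N'` is obtained from `N` by adding a leaf to a reticulation arc. -/
def IsRetArcLeafAddition (N N' : Network) : Prop :=
  ∃ u v : ℕ, IsRet N v ∧ IsLeafAdditionOn N N' u v

/-- `P` holds after exactly `k` steps of relation `step` starting from `N`. -/
def ReachableBy (step : Network → Network → Prop) (N : Network) (k : ℕ)
    (P : Network → Prop) : Prop :=
  ∃ M : ℕ → Network, M 0 = N ∧ (∀ i : ℕ, i < k → step (M i) (M (i + 1))) ∧ P (M k)

/-- The minimum number of leaf additions needed to bring `N` into the class `P`. -/
noncomputable def leafAddDist (P : Network → Prop) (N : Network) : ℕ :=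
  sInf {k : ℕ | ReachableBy IsLeafAddition N k P}

noncomputable def LTC (N : Network) : ℕ := leafAddDist IsTreeChild N

/-- Reduction of a cherry (x,y): delete the leaf x and suppress its parent p
(whose own parent is q, gaining the arc q → y). -/
def ReducesCherry (N N' : Network) (x y : ℕ) : Prop :=
  ∃ p q : ℕ, IsLeaf N x ∧ IsLeaf N y ∧ x ≠ y ∧
    N.arc p x = true ∧ N.arc p y = true ∧ N.arc q p = true ∧
    N'.verts = (N.verts.erase x).erase p ∧ N'.root = N.root ∧
    ∀ a b : ℕ, (N'.arc a b = true ↔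
      (N.arc a b = true ∧ a ≠ p ∧ b ≠ p ∧ b ≠ x) ∨ (a = q ∧ b = y))

/-- Reduction of a reticulated cherry (x,y): delete the arc from the parent p_y of y
to the reticulation parent p_x of x, and clean up (suppressing p_x and p_y). -/
def ReducesRetCherry (N N' : Network) (x y : ℕ) : Prop :=
  ∃ px py z q : ℕ, IsLeaf N x ∧ IsLeaf N y ∧ IsRet N px ∧
    N.arc px x = true ∧ N.arc py px = true ∧ N.arc py y = true ∧
    N.arc z px = true ∧ z ≠ py ∧ N.arc q py = true ∧
    N'.verts = (N.verts.erase px).erase py ∧ N'.root = N.root ∧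
    ∀ a b : ℕ, (N'.arc a b = true ↔
      (N.arc a b = true ∧ a ≠ px ∧ a ≠ py ∧ b ≠ px ∧ b ≠ py) ∨
        (a = z ∧ b = x) ∨ (a = q ∧ b = y))

def CherryStep (N N' : Network) : Prop :=
  ∃ x y : ℕ, ReducesCherry N N' x y ∨ ReducesRetCherry N N' x y

/-- A network consisting of the root and a single leaf. -/
def IsSingleLeaf (N : Network) : Prop := ∃ x : ℕ, x ≠ N.root ∧ N.verts = {N.root, x}

/-- Orchard: reducible to a single leaf by cherry and reticulated cherry reductions. -/
def IsOrchard (N : Network) : Prop :=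
  ∃ N' : Network, Relation.ReflTransGen CherryStep N N' ∧ IsSingleLeaf N'

noncomputable def LOR (N : Network) : ℕ := leafAddDist IsOrchard N

/-- Tree-based: there is a spanning tree (a choice of one incoming arc for each
non-root vertex) all of whose leaves are leaves of `N`. -/
def IsTreeBased (N : Network) : Prop :=
  ∃ T : ℕ → ℕ → Bool, (∀ u v : ℕ, T u v = true → N.arc u v = true) ∧
    (∀ v ∈ N.verts, v ≠ N.root → (N.verts.filter fun u => T u v = true).card = 1) ∧
    (∀ v ∈ N.verts, ¬ IsLeaf N v → ∃ w : ℕ, T v w = true)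

noncomputable def LTB (N : Network) : ℕ := leafAddDist IsTreeBased N

/-- A zig-zag trail: a nonempty duplicate-free sequence of arcs in which
consecutive arcs share a tail or share a head. -/
def IsZigZag (N : Network) (s : List (ℕ × ℕ)) : Prop :=
  s ≠ [] ∧ s.Nodup ∧ (∀ a ∈ s, N.arc a.1 a.2 = true) ∧
    List.Chain' (fun a b : ℕ × ℕ => a.1 = b.1 ∨ a.2 = b.2) s

def IsMaximalZigZag (N : Network) (s : List (ℕ × ℕ)) : Prop :=
  IsZigZag N s ∧ ∀ t : List (ℕ × ℕ), IsZigZag N t → s.Sublist t → t.length = s.length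

/-- A W-fence: a maximal zig-zag trail of even length whose two end-arc tails
are both reticulations. -/
def IsWFence (N : Network) (s : List (ℕ × ℕ)) : Prop :=
  IsMaximalZigZag N s ∧ s.length % 2 = 0 ∧ 2 ≤ s.length ∧
    IsRet N (s.headD (0, 0)).1 ∧ IsRet N (s.getLastD (0, 0)).1

/-- An N-fence: a maximal zig-zag trail of odd length exactly one of whose
end-arc tails is a reticulation. -/
def IsNFence (N : Network) (s : List (ℕ × ℕ)) : Prop :=
  IsMaximalZigZag N s ∧ s.length % 2 = 1 ∧
    Xor' (IsRet N (s.headD (0, 0)).1) (IsRet N (s.getLastD (0, 0)).1)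

/-- A zig-zag decomposition: a set of maximal zig-zag trails partitioning the
non-root arcs of the network. -/
def IsZigZagDecomposition (N : Network) (D : Set (List (ℕ × ℕ))) : Prop :=
  (∀ s ∈ D, IsMaximalZigZag N s) ∧
  (∀ s ∈ D, ∀ p ∈ s, p.1 ≠ N.root) ∧
  (∀ a b : ℕ, N.arc a b = true → a ≠ N.root → ∃! s : List (ℕ × ℕ), s ∈ D ∧ (a, b) ∈ s)

/-- A cherry shape: two arcs with a common tail. -/
def IsCherryShape (N : Network) (s : Set (ℕ × ℕ)) : Prop :=
  ∃ p x y : ℕ, x ≠ y ∧ N.arc p x = true ∧ N.arc p y = true ∧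
    s = {(p, x), (p, y)}

/-- A reticulated cherry shape: arcs p_x x, p_y p_x, p_y y where p_x is a reticulation;
its middle arc is p_y p_x. -/
def IsRetCherryShape (N : Network) (s : Set (ℕ × ℕ)) : Prop :=
  ∃ x y px py : ℕ, IsRet N px ∧ N.arc px x = true ∧ N.arc py px = true ∧
    N.arc py y = true ∧ y ≠ px ∧ s = {(px, x), (py, px), (py, y)}

/-- `s` is a reticulated cherry shape with middle arc `(u, r)`. -/
def IsMiddleArcOf (N : Network) (s : Set (ℕ × ℕ)) (u r : ℕ) : Prop :=
  ∃ x y : ℕ, IsRet N r ∧ N.arc r x = true ∧ N.arc u r = true ∧ N.arc u y = true ∧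
    y ≠ r ∧ s = {(r, x), (u, r), (u, y)}

/-- A cherry cover: cherry shapes and reticulated cherry shapes covering every
non-root arc exactly once. -/
def IsCherryCover (N : Network) (P : Set (Set (ℕ × ℕ))) : Prop :=
  (∀ s ∈ P, IsCherryShape N s ∨ IsRetCherryShape N s) ∧
  (∀ a b : ℕ, N.arc a b = true → a ≠ N.root →
    ∃! s : Set (ℕ × ℕ), s ∈ P ∧ (a, b) ∈ s)

/-- The internal vertices of a shape are the tails of its arcs. -/
def shapeInternals (s : Set (ℕ × ℕ)) : Set ℕ := {p : ℕ | ∃ x : ℕ, (p, x) ∈ s}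

/-- The endpoints of a shape: heads of its arcs that are not tails of its arcs. -/
def shapeEndpoints (s : Set (ℕ × ℕ)) : Set ℕ :=
  {x : ℕ | (∃ p : ℕ, (p, x) ∈ s) ∧ ∀ y : ℕ, (x, y) ∉ s}

/-- In the auxiliary graph, shape `B` is directly above shape `C` if an internal
vertex of `C` is an endpoint of `B`. -/
def DirectlyAbove (B C : Set (ℕ × ℕ)) : Prop :=
  ∃ v : ℕ, v ∈ shapeEndpoints B ∧ v ∈ shapeInternals C

/-- The auxiliary graph of the cherry cover `P` contains a directed cycle. -/
def HasCyclicAux (P : Set (Set (ℕ × ℕ))) : Prop :=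
  ∃ s ∈ P, Relation.TransGen
    (fun B C : Set (ℕ × ℕ) => B ∈ P ∧ C ∈ P ∧ DirectlyAbove B C) s s

/-- A non-temporal labelling of `N`. -/
def IsNonTemporal (N : Network) (t : ℕ → ℝ) : Prop :=
  (∀ u v : ℕ, N.arc u v = true → t u ≤ t v) ∧
  (∀ u v : ℕ, N.arc u v = true → t u = t v → IsRet N v) ∧
  (∀ u : ℕ, IsInternal N u → ∃ v : ℕ, N.arc u v = true ∧ t u < t v) ∧
  (∀ r u v : ℕ, IsRet N r → N.arc u r = true → N.arc v r = true → u ≠ v →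
    ¬ (t u = t r ∧ t v = t r))

/-- An inret: a reticulation with no incoming horizontal arc
(i.e. both incoming arcs vertical). -/
def Inret (N : Network) (t : ℕ → ℝ) (r : ℕ) : Prop :=
  IsRet N r ∧ ∀ u : ℕ, N.arc u r = true → t u ≠ t r

noncomputable def inretCount (N : Network) (t : ℕ → ℝ) : ℕ := {r : ℕ | Inret N t r}.ncard

/-- HGT-consistent labelling: a non-temporal labelling in which every reticulation
has exactly one incoming horizontal arc. -/
def IsHGTConsistent (N : Network) (t : ℕ → ℝ) : Prop :=
  IsNonTemporal N t ∧ ∀ r : ℕ, IsRet N r → ∃! u : ℕ, N.arc u r = true ∧ t u = t r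

/-- V_OR: the minimum number of inrets over all non-temporal labellings. -/
noncomputable def VOR (N : Network) : ℕ :=
  sInf {k : ℕ | ∃ t : ℕ → ℝ, IsNonTemporal N t ∧ inretCount N t = k}

/-- The network `N` is the result of the vertex-cover reduction applied to `G`. -/
def IsVCReduction {α : Type} [Fintype α] [DecidableEq α] (G : SimpleGraph α)
    (N : Network) : Prop :=
  ∃ (R W L M : α → ℕ → ℕ) (P : α → ℕ) (S : ℕ → ℕ) (rho : ℕ)
    (e : ℕ → α) (pi tau : α → α → ℕ),
    (∀ v : α, ∃! i : ℕ, 1 ≤ i ∧ i ≤ Fintype.card α ∧ e i = v) ∧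
    (∀ v u : α, G.Adj v u → pi v u ∈ ({1, 2, 3} : Set ℕ)) ∧
    (∀ v u u' : α, G.Adj v u → G.Adj v u' → pi v u = pi v u' → u = u') ∧
    (∀ v u : α, G.Adj v u → tau v u ∈ ({5, 6, 7} : Set ℕ)) ∧
    (∀ v u u' : α, G.Adj v u → G.Adj v u' → tau v u = tau v u' → u = u') ∧
    Function.Injective
      (fun z : (α × Fin 8) ⊕ (α × Fin 7) ⊕ (α × Fin 5) ⊕ (α × Fin 4) ⊕ α ⊕
          (Fin (Fintype.card α - 1)) ⊕ Unit =>
        match z with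
        | Sum.inl (v, i) => R v i.1
        | Sum.inr (Sum.inl (v, i)) => W v (i.1 + 1)
        | Sum.inr (Sum.inr (Sum.inl (v, i))) => L v (i.1 + 1)
        | Sum.inr (Sum.inr (Sum.inr (Sum.inl (v, i)))) => M v (i.1 + 1)
        | Sum.inr (Sum.inr (Sum.inr (Sum.inr (Sum.inl v)))) => P v
        | Sum.inr (Sum.inr (Sum.inr (Sum.inr (Sum.inr (Sum.inl i))))) => S (i.1 + 1)
        | Sum.inr (Sum.inr (Sum.inr (Sum.inr (Sum.inr (Sum.inr _))))) => rho) ∧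
    N.root = rho ∧
    (∀ x : ℕ, x ∈ N.verts ↔
      (∃ v i, i ≤ 7 ∧ x = R v i) ∨ (∃ v i, 1 ≤ i ∧ i ≤ 7 ∧ x = W v i) ∨
      (∃ v i, 1 ≤ i ∧ i ≤ 5 ∧ x = L v i) ∨ (∃ v i, 1 ≤ i ∧ i ≤ 4 ∧ x = M v i) ∨
      (∃ v, x = P v) ∨ (∃ i, 1 ≤ i ∧ i ≤ Fintype.card α - 1 ∧ x = S i) ∨ x = rho) ∧
    (∀ a b : ℕ, N.arc a b = true ↔
      (a = rho ∧ b = S 1) ∨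
      (∃ i, 1 ≤ i ∧ i ≤ Fintype.card α - 2 ∧ a = S i ∧ b = S (i + 1)) ∨
      (∃ i, 1 ≤ i ∧ i ≤ Fintype.card α - 1 ∧ a = S i ∧ b = P (e i)) ∨
      (a = S (Fintype.card α - 1) ∧ b = P (e (Fintype.card α))) ∨
      (∃ v, a = P v ∧ (b = M v 4 ∨ b = W v 7)) ∨
      (∃ v, a = M v 4 ∧ (b = M v 3 ∨ b = R v 0)) ∨
      (∃ v, a = M v 3 ∧ (b = M v 2 ∨ b = W v 6)) ∨
      (∃ v, a = M v 2 ∧ (b = M v 1 ∨ b = W v 5)) ∨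
      (∃ v, a = M v 1 ∧ (b = R v 0 ∨ b = W v 4)) ∨
      (∃ v, a = R v 0 ∧ b = R v 1) ∨
      (∃ v i, 1 ≤ i ∧ i ≤ 6 ∧ a = W v i ∧ (b = R v i ∨ b = R v (i + 1))) ∨
      (∃ v, a = W v 7 ∧ (b = R v 7 ∨ b = L v 5)) ∨
      (∃ v i, 1 ≤ i ∧ i ≤ 4 ∧ a = R v i ∧ b = L v i) ∨
      (∃ u v, G.Adj u v ∧ a = R u (tau u v) ∧ b = W v (pi v u)))

/-!
Adding a leaf to an arc `uv` subdivides it with a new tree vertex `w`. No vertex of `N` changes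
its type, and only `u` changes its children, gaining the tree vertex `w`; so the omnians after the
addition are exactly the omnians of `N` other than `u`. Hence every leaf addition removes at most
one omnian, and adding a leaf below an omnian removes it. On the other hand a network is
tree-child exactly when it has no omnian: the root's child is never a reticulation, since a
second parent of it would be a descendant of it.
-/

namespace Network

variable (N : Network)

lemma ne_root_of_arc {a c : ℕ} (h : N.arc a c = true) : c ≠ N.root := by
  rintro rfl
  have := N.root_indeg
  rw [Finset.card_eq_zero, Finset.filter_eq_empty_iff] at this
  exact this (N.arc_mem a _ h).1 h

lemma exists_arc_of_ne_root {c : ℕ} (hc : c ∈ N.verts) (hcr : c ≠ N.root) :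
    ∃ p, N.arc p c = true := by
  have : 0 < inDeg N c := by
    rcases N.nonroot_deg c hc hcr with ⟨h, -⟩ | ⟨h, -⟩ | ⟨h, -⟩ <;> rw [inDeg, h] <;> omega
  obtain ⟨p, hp⟩ := Finset.card_pos.mp this
  exact ⟨p, (Finset.mem_filter.mp hp).2⟩

lemma reflTransGen_root {z : ℕ} (hz : z ∈ N.verts) :
    Relation.ReflTransGen (fun a b => N.arc a b = true) N.root z := by
  let IsAncestor (a b : N.verts) : Prop := Relation.TransGen (fun p q => N.arc p q = true) a b
  have : IsTrans N.verts IsAncestor := ⟨fun _ _ _ => Relation.TransGen.trans⟩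
  have : Std.Irrefl IsAncestor := ⟨fun a => N.acyclic a⟩
  refine (Finite.wellFounded_of_trans_of_irrefl IsAncestor).induction
    (C := fun a => Relation.ReflTransGen (fun p q => N.arc p q = true) N.root a) ⟨z, hz⟩ ?_
  rintro ⟨y, hy⟩ ih
  by_cases hyr : y = N.root
  · exact hyr ▸ .refl
  obtain ⟨p, hp⟩ := N.exists_arc_of_ne_root hy hyr
  exact (ih ⟨p, (N.arc_mem p y hp).1⟩ (.single hp)).tail hp

lemma not_isRet_of_arc_root {c : ℕ} (h : N.arc N.root c = true) : ¬ IsRet N c := by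
  intro hc
  obtain ⟨p, hp, hpr⟩ : ∃ p, N.arc p c = true ∧ p ≠ N.root := by
    have : 1 < inDeg N c := by rw [hc.2]; omega
    obtain ⟨a, ha, b, hb, hab⟩ := Finset.one_lt_card.mp this
    by_cases har : a = N.root
    · exact ⟨b, (Finset.mem_filter.mp hb).2, fun hbr => hab (har.trans hbr.symm)⟩
    · exact ⟨a, (Finset.mem_filter.mp ha).2, har⟩
  -- the second parent `p` descends from the root's unique child `c`, closing a cycle through `c`
  obtain ⟨d, hd, hdp⟩ := (N.reflTransGen_root (N.arc_mem p c hp).1).cases_head.resolve_left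
    (Ne.symm hpr)
  obtain ⟨e, he⟩ := Finset.card_eq_one.mp N.root_outdeg
  have hce : c = e := Finset.mem_singleton.mp (he ▸ Finset.mem_filter.mpr ⟨hc.1, h⟩)
  have hde : d = e :=
    Finset.mem_singleton.mp (he ▸ Finset.mem_filter.mpr ⟨(N.arc_mem _ d hd).2, hd⟩)
  exact N.acyclic c (Relation.TransGen.tail' (hce ▸ hde ▸ hdp) hp)

lemma isTreeVert_or_isLeaf_of_arc {a c : ℕ} (h : N.arc a c = true) (hc : ¬ IsRet N c) :
    IsTreeVert N c ∨ IsLeaf N c := by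
  have hcN := (N.arc_mem a c h).2
  rcases N.nonroot_deg c hcN (N.ne_root_of_arc h) with hdeg | hdeg | hdeg
  · exact .inl ⟨hcN, hdeg⟩
  · exact absurd ⟨hcN, hdeg.1⟩ hc
  · exact .inr ⟨hcN, hdeg⟩

lemma exists_arc_of_not_isLeaf {z : ℕ} (hz : z ∈ N.verts) (hzl : ¬ IsLeaf N z) :
    ∃ c, N.arc z c = true := by
  have : 0 < outDeg N z := by
    by_cases hzr : z = N.root
    · rw [outDeg, hzr, N.root_outdeg]; omega
    rcases N.nonroot_deg z hz hzr with ⟨-, h⟩ | ⟨-, h⟩ | h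
    · rw [outDeg, h]; omega
    · rw [outDeg, h]; omega
    · exact absurd ⟨hz, h⟩ hzl
  obtain ⟨c, hc⟩ := Finset.card_pos.mp this
  exact ⟨c, (Finset.mem_filter.mp hc).2⟩

lemma isTreeChild_iff_forall_not_isOmnian : IsTreeChild N ↔ ∀ z, ¬ IsOmnian N z := by
  constructor
  · rintro hN z ⟨⟨hz, -, hzl⟩, hall⟩
    obtain ⟨c, hc, ⟨-, h1, -⟩ | ⟨-, h1, -⟩⟩ := hN z hz hzl <;> have := (hall c hc).2 <;> omega
  · intro hN z hz hzl
    by_cases hzr : z = N.root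
    · obtain ⟨c, hc⟩ := N.exists_arc_of_not_isLeaf hz hzl
      subst hzr
      exact ⟨c, hc, N.isTreeVert_or_isLeaf_of_arc hc (N.not_isRet_of_arc_root hc)⟩
    · obtain ⟨c, hc, hcr⟩ : ∃ c, N.arc z c = true ∧ ¬ IsRet N c := by
        simpa [IsOmnian, IsInternal, hz, hzr, hzl] using hN z
      exact ⟨c, hc, N.isTreeVert_or_isLeaf_of_arc hc hcr⟩

lemma finite_setOf_isOmnian : {z | IsOmnian N z}.Finite :=
  N.verts.finite_toSet.subset fun _ hz => hz.1.1

lemma isTreeChild_iff_omnianCount_eq_zero : IsTreeChild N ↔ omnianCount N = 0 := by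
  rw [isTreeChild_iff_forall_not_isOmnian, omnianCount, Set.ncard_eq_zero N.finite_setOf_isOmnian,
    Set.eq_empty_iff_forall_notMem]
  rfl

end Network

/-- Adding the leaf `x` to the arc `uv` via the new vertex `w`, phrased for a bare vertex set and
arc function so that it can also be used to construct the new network. -/
structure IsLeafAddedGraph (N : Network) (u v w x : ℕ) (V' : Finset ℕ) (A' : ℕ → ℕ → Bool) :
    Prop where
  arc_uv : N.arc u v = true
  w_notMem : w ∉ N.verts
  x_notMem : x ∉ N.verts
  w_ne_x : w ≠ x
  verts_eq : V' = insert w (insert x N.verts)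
  arc_iff : ∀ a b : ℕ, A' a b = true ↔
      (N.arc a b = true ∧ ¬ (a = u ∧ b = v)) ∨ (a = u ∧ b = w) ∨
        (a = w ∧ b = v) ∨ (a = w ∧ b = x)

namespace IsLeafAddedGraph

/-- Collapsing `w` and `x` onto `v` turns a cycle through the new graph into a cycle of `N`. -/
def collapse (w x v a : ℕ) : ℕ := if a = w ∨ a = x then v else a

lemma collapse_left (w x v : ℕ) : collapse w x v w = v := if_pos (Or.inl rfl)

lemma collapse_right (w x v : ℕ) : collapse w x v x = v := if_pos (Or.inr rfl)

section

variable {N : Network} {u v w x : ℕ} {V' : Finset ℕ} {A' : ℕ → ℕ → Bool}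
  (G : IsLeafAddedGraph N u v w x V' A')
include G

lemma u_mem : u ∈ N.verts := (N.arc_mem u v G.arc_uv).1
lemma v_mem : v ∈ N.verts := (N.arc_mem u v G.arc_uv).2

lemma filter_arc_to_of_ne {b : ℕ} (hb : b ∈ N.verts) (hbv : b ≠ v) :
    V'.filter (fun a => A' a b = true) = N.verts.filter (fun a => N.arc a b = true) := by
  ext a
  simp only [Finset.mem_filter, G.verts_eq, Finset.mem_insert, G.arc_iff]
  grind [G.w_notMem, G.x_notMem, N.arc_mem]

lemma filter_arc_to_v : V'.filter (fun a => A' a v = true)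
    = insert w ((N.verts.filter (fun a => N.arc a v = true)).erase u) := by
  ext a
  simp only [Finset.mem_filter, G.verts_eq, Finset.mem_insert, Finset.mem_erase, G.arc_iff]
  grind [G.w_notMem, G.x_notMem, G.u_mem, G.v_mem, N.arc_mem]

lemma filter_arc_to_w : V'.filter (fun a => A' a w = true) = {u} := by
  ext a
  simp only [Finset.mem_filter, G.verts_eq, Finset.mem_insert, Finset.mem_singleton, G.arc_iff]
  grind [G.w_notMem, G.u_mem, G.v_mem, G.w_ne_x, N.arc_mem]

lemma filter_arc_to_x : V'.filter (fun a => A' a x = true) = {w} := by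
  ext a
  simp only [Finset.mem_filter, G.verts_eq, Finset.mem_insert, Finset.mem_singleton, G.arc_iff]
  grind [G.x_notMem, G.v_mem, G.w_ne_x, N.arc_mem]

lemma filter_arc_from_of_ne {a : ℕ} (ha : a ∈ N.verts) (hau : a ≠ u) :
    V'.filter (fun b => A' a b = true) = N.verts.filter (fun b => N.arc a b = true) := by
  ext b
  simp only [Finset.mem_filter, G.verts_eq, Finset.mem_insert, G.arc_iff]
  grind [G.w_notMem, N.arc_mem]

lemma filter_arc_from_u : V'.filter (fun b => A' u b = true)
    = insert w ((N.verts.filter (fun b => N.arc u b = true)).erase v) := by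
  ext b
  simp only [Finset.mem_filter, G.verts_eq, Finset.mem_insert, Finset.mem_erase, G.arc_iff]
  grind [G.w_notMem, G.u_mem, G.v_mem, N.arc_mem]

lemma filter_arc_from_w : V'.filter (fun b => A' w b = true) = {v, x} := by
  ext b
  simp only [Finset.mem_filter, G.verts_eq, Finset.mem_insert, Finset.mem_singleton, G.arc_iff]
  grind [G.w_notMem, G.u_mem, G.v_mem, N.arc_mem]

lemma arc_x_eq_false (b : ℕ) : A' x b = false := by
  have := G.arc_iff x b; have := N.arc_mem x b
  grind [G.x_notMem, G.u_mem, G.w_ne_x]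

lemma collapse_of_mem {a : ℕ} (ha : a ∈ N.verts) : collapse w x v a = a :=
  if_neg (by rintro (rfl | rfl) <;> simp_all [G.w_notMem, G.x_notMem])

lemma reflTransGen_collapse_of_arc {a b : ℕ} (h : A' a b = true) :
    Relation.ReflTransGen (fun p q => N.arc p q = true) (collapse w x v a) (collapse w x v b) := by
  rcases (G.arc_iff a b).mp h with ⟨hab, -⟩ | ⟨rfl, rfl⟩ | ⟨rfl, rfl⟩ | ⟨rfl, rfl⟩
  · rw [G.collapse_of_mem (N.arc_mem a b hab).1, G.collapse_of_mem (N.arc_mem a b hab).2]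
    exact .single hab
  · rw [G.collapse_of_mem G.u_mem, collapse_left]
    exact .single G.arc_uv
  · rw [collapse_left, G.collapse_of_mem G.v_mem]
  · rw [collapse_left, collapse_right]

lemma transGen_collapse {a b : ℕ} (h : Relation.TransGen (fun p q => A' p q = true) a b)
    (ha : a ∈ N.verts) : Relation.TransGen (fun p q => N.arc p q = true) a (collapse w x v b) := by
  induction h with
  | single hab =>
    rcases (G.arc_iff a _).mp hab with ⟨hab, -⟩ | ⟨rfl, rfl⟩ | ⟨rfl, -⟩ | ⟨rfl, -⟩
    · rw [G.collapse_of_mem (N.arc_mem a _ hab).2]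
      exact .single hab
    · rw [collapse_left]
      exact .single G.arc_uv
    · exact absurd ha G.w_notMem
    · exact absurd ha G.w_notMem
  | tail _ hbc ih => exact ih.trans_left (G.reflTransGen_collapse_of_arc hbc)

lemma acyclic (z : ℕ) : ¬ Relation.TransGen (fun a b => A' a b = true) z z := by
  intro hz
  by_cases hzN : z ∈ N.verts
  · have := G.transGen_collapse hz hzN
    rw [G.collapse_of_mem hzN] at this
    exact N.acyclic z this
  obtain ⟨c, hzc, hcz⟩ := Relation.TransGen.head'_iff.mp hz
  have hcc : Relation.TransGen (fun a b => A' a b = true) c c := Relation.TransGen.tail' hcz hzc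
  -- a cycle can only leave `N` at `w`, and then it continues to `v`
  have hcv : c = v := by
    obtain ⟨d, hcd, -⟩ := Relation.TransGen.head'_iff.mp hcc
    have := G.arc_iff z c; have := N.arc_mem z c; have := G.arc_x_eq_false d
    grind [G.u_mem]
  subst hcv
  have := G.transGen_collapse hcc G.v_mem
  rw [G.collapse_of_mem G.v_mem] at this
  exact N.acyclic c this

lemma card_filter_arc_to {b : ℕ} (hb : b ∈ N.verts) :
    (V'.filter fun a => A' a b = true).card = inDeg N b := by
  by_cases hbv : b = v
  · subst hbv
    have hu : u ∈ N.verts.filter (fun a => N.arc a b = true) :=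
      Finset.mem_filter.mpr ⟨G.u_mem, G.arc_uv⟩
    have hw : w ∉ (N.verts.filter fun a => N.arc a b = true).erase u :=
      fun h => G.w_notMem (Finset.mem_filter.mp (Finset.mem_of_mem_erase h)).1
    rw [G.filter_arc_to_v, Finset.card_insert_of_notMem hw, Finset.card_erase_add_one hu, inDeg]
  · rw [G.filter_arc_to_of_ne hb hbv, inDeg]

lemma card_filter_arc_from {a : ℕ} (ha : a ∈ N.verts) :
    (V'.filter fun b => A' a b = true).card = outDeg N a := by
  by_cases hau : a = u
  · subst hau
    have hv : v ∈ N.verts.filter (fun b => N.arc a b = true) :=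
      Finset.mem_filter.mpr ⟨G.v_mem, G.arc_uv⟩
    have hw : w ∉ (N.verts.filter fun b => N.arc a b = true).erase v :=
      fun h => G.w_notMem (Finset.mem_filter.mp (Finset.mem_of_mem_erase h)).1
    rw [G.filter_arc_from_u, Finset.card_insert_of_notMem hw, Finset.card_erase_add_one hv, outDeg]
  · rw [G.filter_arc_from_of_ne ha hau, outDeg]

lemma card_filter_arc_from_w : (V'.filter fun b => A' w b = true).card = 2 := by
  rw [G.filter_arc_from_w, Finset.card_pair]
  exact fun h => G.x_notMem (h ▸ G.v_mem)

lemma card_filter_arc_from_x : (V'.filter fun b => A' x b = true).card = 0 := by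
  simp [G.arc_x_eq_false]

lemma mem_of_mem {a : ℕ} (ha : a ∈ N.verts) : a ∈ V' := by
  rw [G.verts_eq]
  exact Finset.mem_insert_of_mem (Finset.mem_insert_of_mem ha)

def toNetwork : Network where
  verts := V'
  arc := A'
  root := N.root
  root_mem := G.mem_of_mem N.root_mem
  arc_mem a b h := by
    rw [G.verts_eq]
    rcases (G.arc_iff a b).mp h with ⟨hab, -⟩ | ⟨rfl, rfl⟩ | ⟨rfl, rfl⟩ | ⟨rfl, rfl⟩ <;>
      simp [N.arc_mem a b, G.u_mem, G.v_mem, *]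
  acyclic := G.acyclic
  root_indeg := by rw [G.card_filter_arc_to N.root_mem]; exact N.root_indeg
  root_outdeg := by rw [G.card_filter_arc_from N.root_mem]; exact N.root_outdeg
  nonroot_deg z hz hzr := by
    rw [G.verts_eq, Finset.mem_insert, Finset.mem_insert] at hz
    rcases hz with rfl | rfl | hz
    · rw [G.filter_arc_to_w, G.card_filter_arc_from_w]; simp
    · rw [G.filter_arc_to_x, G.card_filter_arc_from_x]; simp
    · rw [G.card_filter_arc_to hz, G.card_filter_arc_from hz]
      exact N.nonroot_deg z hz hzr

lemma isLeafAdditionOn_toNetwork : IsLeafAdditionOn N G.toNetwork u v :=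
  ⟨G.arc_uv, w, x, G.w_notMem, G.x_notMem, G.w_ne_x, G.verts_eq, rfl, G.arc_iff⟩

end

section

variable {N N' : Network} {u v w x : ℕ} (G : IsLeafAddedGraph N u v w x N'.verts N'.arc)
include G

lemma isRet_iff {b : ℕ} (hb : b ∈ N.verts) : IsRet N' b ↔ IsRet N b := by
  simp only [IsRet, inDeg, G.card_filter_arc_to hb, G.mem_of_mem hb, hb, true_and]

lemma isLeaf_iff {b : ℕ} (hb : b ∈ N.verts) : IsLeaf N' b ↔ IsLeaf N b := by
  simp only [IsLeaf, inDeg, outDeg, G.card_filter_arc_to hb, G.card_filter_arc_from hb,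
    G.mem_of_mem hb, hb, true_and]

lemma arc_iff_of_ne {a b : ℕ} (ha : a ∈ N.verts) (hau : a ≠ u) :
    N'.arc a b = true ↔ N.arc a b = true := by
  have := G.w_notMem
  grind [G.arc_iff a b]

lemma not_isRet_w : ¬ IsRet N' w := by
  rintro ⟨-, h⟩
  rw [inDeg, G.filter_arc_to_w] at h
  simp at h

lemma isLeaf_x : IsLeaf N' x := by
  refine ⟨?_, ?_, G.card_filter_arc_from_x⟩
  · rw [G.verts_eq]; simp
  · rw [inDeg, G.filter_arc_to_x]; rfl

lemma isOmnian_iff {z : ℕ} (hz : z ∈ N.verts) (hzu : z ≠ u) (hroot : N'.root = N.root) :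
    IsOmnian N' z ↔ IsOmnian N z := by
  simp only [IsOmnian, IsInternal, G.mem_of_mem hz, hz, hroot, G.isLeaf_iff hz,
    G.arc_iff_of_ne hz hzu]
  refine and_congr_right fun _ => forall_congr' fun c => imp_congr_right fun hc => ?_
  exact G.isRet_iff (N.arc_mem z c hc).2

lemma setOf_isOmnian (hroot : N'.root = N.root) :
    {z | IsOmnian N' z} = {z | IsOmnian N z} \ {u} := by
  ext z
  simp only [Set.mem_ofPred_eq, Set.mem_sdiff, Set.mem_singleton_iff]
  by_cases hzu : z = u
  · subst hzu
    simp only [not_true_eq_false, and_false, iff_false]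
    exact fun h => G.not_isRet_w (h.2 w ((G.arc_iff z w).mpr (.inr (.inl ⟨rfl, rfl⟩))))
  by_cases hz : z ∈ N.verts
  · rw [G.isOmnian_iff hz hzu hroot]
    exact (and_iff_left hzu).symm
  refine iff_of_false ?_ fun h => hz h.1.1.1
  rintro ⟨⟨hzV, -, hzl⟩, hall⟩
  rw [G.verts_eq, Finset.mem_insert, Finset.mem_insert] at hzV
  rcases hzV with rfl | rfl | hzN
  · have := (hall x ((G.arc_iff z x).mpr (.inr (.inr (.inr ⟨rfl, rfl⟩))))).2
    have := G.isLeaf_x.2.1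
    omega
  · exact hzl G.isLeaf_x
  · exact hz hzN

end

end IsLeafAddedGraph

lemma exists_isLeafAdditionOn {N : Network} {u v : ℕ} (huv : N.arc u v = true) :
    ∃ N', IsLeafAdditionOn N N' u v := by
  obtain ⟨w, hw⟩ := Infinite.exists_notMem_finset N.verts
  obtain ⟨x, hx⟩ := Infinite.exists_notMem_finset (insert w N.verts)
  rw [Finset.mem_insert, not_or] at hx
  let A' a b := decide ((N.arc a b = true ∧ ¬ (a = u ∧ b = v)) ∨ (a = u ∧ b = w) ∨
    (a = w ∧ b = v) ∨ (a = w ∧ b = x))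
  have G : IsLeafAddedGraph N u v w x _ A' :=
    ⟨huv, hw, hx.2, Ne.symm hx.1, rfl, fun a b => decide_eq_true_iff⟩
  exact ⟨G.toNetwork, G.isLeafAdditionOn_toNetwork⟩

lemma IsLeafAdditionOn.setOf_isOmnian {N N' : Network} {u v : ℕ}
    (h : IsLeafAdditionOn N N' u v) : {z | IsOmnian N' z} = {z | IsOmnian N z} \ {u} := by
  obtain ⟨huv, w, x, hw, hx, hwx, hV, hroot, hA⟩ := h
  exact IsLeafAddedGraph.setOf_isOmnian ⟨huv, hw, hx, hwx, hV, hA⟩ hroot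

lemma IsLeafAdditionOn.omnianCount_add_one {N N' : Network} {u v : ℕ}
    (h : IsLeafAdditionOn N N' u v) (hu : IsOmnian N u) : omnianCount N' + 1 = omnianCount N := by
  rw [omnianCount, h.setOf_isOmnian, omnianCount,
    Set.ncard_sdiff_singleton_add_one (s := {z | IsOmnian N z}) hu N.finite_setOf_isOmnian]

lemma IsLeafAddition.omnianCount_le {N N' : Network} (h : IsLeafAddition N N') :
    omnianCount N ≤ omnianCount N' + 1 := by
  obtain ⟨u, v, h⟩ := h
  rw [omnianCount, omnianCount, h.setOf_isOmnian]
  calc {z | IsOmnian N z}.ncard ≤ (insert u ({z | IsOmnian N z} \ {u})).ncard :=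
        Set.ncard_le_ncard (fun z hz => by by_cases hzu : z = u <;> simp [hz, hzu])
          (N.finite_setOf_isOmnian.sdiff.insert u)
    _ ≤ _ := Set.ncard_insert_le _ _

section ReachableBy

variable {step : Network → Network → Prop} {P : Network → Prop}

lemma reachableBy_zero {N : Network} : ReachableBy step N 0 P ↔ P N :=
  ⟨fun ⟨_, hM0, _, hP⟩ => hM0 ▸ hP, fun hP => ⟨fun _ => N, rfl, nofun, hP⟩⟩

lemma reachableBy_succ {N : Network} {k : ℕ} :
    ReachableBy step N (k + 1) P ↔ ∃ N', step N N' ∧ ReachableBy step N' k P := by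
  constructor
  · rintro ⟨M, hM0, hstep, hP⟩
    exact ⟨M 1, hM0 ▸ hstep 0 k.succ_pos,
      fun i => M (i + 1), rfl, fun i hi => hstep (i + 1) (by omega), hP⟩
  · rintro ⟨N', hN', M, hM0, hstep, hP⟩
    refine ⟨fun i => Nat.casesOn i N M, rfl, fun i hi => ?_, hP⟩
    cases i with
    | zero =>
      show step N (M 0)
      rwa [hM0]
    | succ i => exact hstep i (by omega)

end ReachableBy

lemma reachableBy_omnianCount (N : Network) :
    ReachableBy IsLeafAddition N (omnianCount N) IsTreeChild := by
  induction h : omnianCount N generalizing N with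
  | zero => exact reachableBy_zero.mpr (N.isTreeChild_iff_omnianCount_eq_zero.mpr h)
  | succ n ih =>
    obtain ⟨u, hu⟩ : {z | IsOmnian N z}.Nonempty :=
      Set.nonempty_of_ncard_ne_zero (by simp only [omnianCount] at h; omega)
    obtain ⟨v, huv⟩ := N.exists_arc_of_not_isLeaf hu.1.1 hu.1.2.2
    obtain ⟨N', hN'⟩ := exists_isLeafAdditionOn huv
    have hcount : omnianCount N' = n := by have := hN'.omnianCount_add_one hu; omega
    exact reachableBy_succ.mpr ⟨N', ⟨u, v, hN'⟩, ih N' hcount⟩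

lemma omnianCount_le_of_reachableBy {N : Network} {k : ℕ}
    (h : ReachableBy IsLeafAddition N k IsTreeChild) : omnianCount N ≤ k := by
  induction k generalizing N with
  | zero => exact ((N.isTreeChild_iff_omnianCount_eq_zero).mp (reachableBy_zero.mp h)).le
  | succ k ih =>
    obtain ⟨N', hN', h'⟩ := reachableBy_succ.mp h
    have := hN'.omnianCount_le
    have := ih h'
    omega

/-- The minimum number of leaf additions needed to make `N`
tree-child equals the number of omnians of `N`. -/
theorem LTC_eq_omnianCount (N : Network) : LTC N = omnianCount N :=
  le_antisymm (Nat.sInf_le (reachableBy_omnianCount N))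
    (le_csInf ⟨_, reachableBy_omnianCount N⟩ fun _ => omnianCount_le_of_reachableBy)

end PhyloNet
end

section
/- Let N be a binary phylogenetic network. If N has a highest reticulation r (a reticulation with no reticulation ancestors) such that every reticulation other than r has a leaf sibling, then N is orchard. -/
namespace PhyloNet

/-!
Induct on the number of vertices, with the invariant `RetsHaveLeafSiblingsExcept N r`: every
reticulation other than `r` is not an ancestor of `r` and has a leaf sibling (`r` itself need not
be a reticulation). Both kinds of reduction only delete vertices, keep the degrees of the remaining
ones and replace arcs by paths of `N`, so they preserve the invariant.

A reduction always exists. Without a cherry, a lowest internal vertex is a reticulation with a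
leaf child. Taken below a reticulation `r' ≠ r`, it is not `r` because `r` is highest, so it has a
leaf sibling and forms a reticulated cherry. If `r` is the only reticulation, a lowest internal
vertex other than `r` is a tree vertex whose children are `r` and a leaf, so `r` has a leaf
sibling.
-/

open Relation

def HasLeafSibling (N : Network) (v : ℕ) : Prop :=
  ∃ p c : ℕ, N.arc p v = true ∧ N.arc p c = true ∧ c ≠ v ∧ IsLeaf N c

def HasCherry (N : Network) : Prop :=
  ∃ p x y : ℕ, x ≠ y ∧ N.arc p x = true ∧ N.arc p y = true ∧ IsLeaf N x ∧ IsLeaf N y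

def RetsHaveLeafSiblingsExcept (N : Network) (r : ℕ) : Prop :=
  ∀ r' : ℕ, IsRet N r' → r' ≠ r →
    ¬ TransGen (fun x y : ℕ => N.arc x y = true) r' r ∧ HasLeafSibling N r'

def PreservesDegrees (N N' : Network) : Prop :=
  ∀ v ∈ N'.verts, v ∈ N.verts ∧ inDeg N' v = inDeg N v ∧ outDeg N' v = outDeg N v

section Basic

variable {N : Network} {u v w x y : ℕ}

lemma mem_verts_of_arc_left (h : N.arc u v = true) : u ∈ N.verts := (N.arc_mem u v h).1

lemma mem_verts_of_arc_right (h : N.arc u v = true) : v ∈ N.verts := (N.arc_mem u v h).2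

lemma ne_of_arc (h : N.arc u v = true) : u ≠ v := by
  rintro rfl; exact N.acyclic u (.single h)

lemma mem_filter_arc_left : u ∈ N.verts.filter (N.arc · v = true) ↔ N.arc u v = true :=
  ⟨fun h => (Finset.mem_filter.1 h).2, fun h => Finset.mem_filter.2 ⟨mem_verts_of_arc_left h, h⟩⟩

lemma mem_filter_arc_right : w ∈ N.verts.filter (N.arc v · = true) ↔ N.arc v w = true :=
  ⟨fun h => (Finset.mem_filter.1 h).2, fun h => Finset.mem_filter.2 ⟨mem_verts_of_arc_right h, h⟩⟩

lemma inDeg_root : inDeg N N.root = 0 := N.root_indeg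

lemma outDeg_root : outDeg N N.root = 1 := N.root_outdeg

lemma inDeg_outDeg_cases (hv : v ∈ N.verts) (hvr : v ≠ N.root) :
    (inDeg N v = 1 ∧ outDeg N v = 2) ∨ (inDeg N v = 2 ∧ outDeg N v = 1) ∨
      (inDeg N v = 1 ∧ outDeg N v = 0) :=
  N.nonroot_deg v hv hvr

lemma inDeg_pos (h : N.arc u v = true) : 0 < inDeg N v :=
  Finset.card_pos.2 ⟨u, mem_filter_arc_left.2 h⟩

lemma outDeg_pos (h : N.arc u v = true) : 0 < outDeg N u :=
  Finset.card_pos.2 ⟨v, mem_filter_arc_right.2 h⟩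

lemma ne_root_of_arc (h : N.arc u v = true) : v ≠ N.root := by
  rintro rfl; have := inDeg_pos h; rw [inDeg_root] at this; omega

lemma eq_of_arc_of_inDeg_eq_one (h1 : inDeg N v = 1) (hu : N.arc u v = true)
    (hw : N.arc w v = true) : u = w :=
  Finset.card_le_one.1 h1.le u (mem_filter_arc_left.2 hu) w (mem_filter_arc_left.2 hw)

lemma eq_of_arc_of_outDeg_eq_one (h1 : outDeg N v = 1) (hu : N.arc v u = true)
    (hw : N.arc v w = true) : u = w :=
  Finset.card_le_one.1 h1.le u (mem_filter_arc_right.2 hu) w (mem_filter_arc_right.2 hw)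

lemma exists_arc_ne_of_one_lt_inDeg (h : 1 < inDeg N v) (u : ℕ) :
    ∃ w, N.arc w v = true ∧ w ≠ u := by
  obtain ⟨w, hw, hwu⟩ := Finset.exists_mem_ne h u
  exact ⟨w, mem_filter_arc_left.1 hw, hwu⟩

lemma exists_arc_ne_of_one_lt_outDeg (h : 1 < outDeg N v) (u : ℕ) :
    ∃ w, N.arc v w = true ∧ w ≠ u := by
  obtain ⟨w, hw, hwu⟩ := Finset.exists_mem_ne h u
  exact ⟨w, mem_filter_arc_right.1 hw, hwu⟩

lemma eq_or_eq_of_inDeg_eq_two (h2 : inDeg N v = 2) (hx : N.arc x v = true)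
    (hy : N.arc y v = true) (hxy : x ≠ y) (hu : N.arc u v = true) : u = x ∨ u = y := by
  obtain ⟨a, b, -, hab⟩ := Finset.card_eq_two.1 h2
  have := mem_filter_arc_left.2 hx; have := mem_filter_arc_left.2 hy
  have := mem_filter_arc_left.2 hu
  simp only [hab, Finset.mem_insert, Finset.mem_singleton] at *
  grind

lemma eq_or_eq_of_outDeg_eq_two (h2 : outDeg N v = 2) (hx : N.arc v x = true)
    (hy : N.arc v y = true) (hxy : x ≠ y) (hw : N.arc v w = true) : w = x ∨ w = y := by
  obtain ⟨a, b, -, hab⟩ := Finset.card_eq_two.1 h2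
  have := mem_filter_arc_right.2 hx; have := mem_filter_arc_right.2 hy
  have := mem_filter_arc_right.2 hw
  simp only [hab, Finset.mem_insert, Finset.mem_singleton] at *
  grind

lemma exists_parent (hv : v ∈ N.verts) (hvr : v ≠ N.root) : ∃ u, N.arc u v = true := by
  have : 0 < inDeg N v := by have := inDeg_outDeg_cases hv hvr; omega
  obtain ⟨u, hu⟩ := Finset.card_pos.1 this
  exact ⟨u, mem_filter_arc_left.1 hu⟩

lemma exists_root_child (N : Network) : ∃ c, N.arc N.root c = true :=
  let ⟨c, hc⟩ := Finset.card_pos.1 (by have := N.root_outdeg; omega)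
  ⟨c, mem_filter_arc_right.1 hc⟩

lemma IsLeaf.arc_eq_false (hv : IsLeaf N v) : N.arc v w = false := by
  by_contra h
  have := outDeg_pos (Bool.not_eq_false _ ▸ h)
  rw [hv.2.2] at this; omega

lemma IsRet.ne_root (hv : IsRet N v) : v ≠ N.root := by
  rintro rfl; have := hv.2; rw [inDeg_root] at this; omega

lemma IsRet.outDeg_eq_one (hv : IsRet N v) : outDeg N v = 1 := by
  have := inDeg_outDeg_cases hv.1 hv.ne_root; have := hv.2; omega

lemma IsRet.not_isLeaf (hv : IsRet N v) : ¬ IsLeaf N v := fun h => by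
  have := hv.2; have := h.2.1; omega

lemma isTreeVert_of_arc_of_arc (hx : N.arc v x = true) (hy : N.arc v y = true) (hxy : x ≠ y) :
    IsTreeVert N v := by
  have h2 : 1 < outDeg N v :=
    Finset.one_lt_card.2 ⟨x, mem_filter_arc_right.2 hx, y, mem_filter_arc_right.2 hy, hxy⟩
  have hvr : v ≠ N.root := by rintro rfl; rw [outDeg_root] at h2; omega
  have := inDeg_outDeg_cases (mem_verts_of_arc_left hx) hvr
  exact ⟨mem_verts_of_arc_left hx, by omega, by omega⟩

lemma IsTreeVert.ne_root (hv : IsTreeVert N v) : v ≠ N.root := by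
  rintro rfl; have := hv.2.1; rw [inDeg_root] at this; omega

end Basic

def Network.ofDegrees (N : Network) (V : Finset ℕ) (A : ℕ → ℕ → Bool) (hsub : V ⊆ N.verts)
    (hroot : N.root ∈ V) (hmem : ∀ u v : ℕ, A u v = true → u ∈ V ∧ v ∈ V)
    (hpath : ∀ u v : ℕ, A u v = true → TransGen (fun a b : ℕ => N.arc a b = true) u v)
    (hin : ∀ v ∈ V, (V.filter (A · v = true)).card = inDeg N v)
    (hout : ∀ v ∈ V, (V.filter (A v · = true)).card = outDeg N v) : Network where
  verts := V
  arc := A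
  root := N.root
  root_mem := hroot
  arc_mem := hmem
  acyclic v hv := N.acyclic v (TransGen.closed hpath v v hv)
  root_indeg := (hin _ hroot).trans N.root_indeg
  root_outdeg := (hout _ hroot).trans N.root_outdeg
  nonroot_deg v hv hvr := by
    rw [hin v hv, hout v hv]; exact N.nonroot_deg v (hsub hv) hvr

section Degrees

variable {N N' : Network} {v : ℕ}

lemma PreservesDegrees.isRet (h : PreservesDegrees N N') (hv : IsRet N' v) : IsRet N v := by
  obtain ⟨hmem, hin, -⟩ := h v hv.1
  exact ⟨hmem, hin ▸ hv.2⟩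

lemma PreservesDegrees.isLeaf (h : PreservesDegrees N N') (hv : IsLeaf N v)
    (hv' : v ∈ N'.verts) : IsLeaf N' v := by
  obtain ⟨-, hin, hout⟩ := h v hv'
  exact ⟨hv', hin ▸ hv.2.1, hout ▸ hv.2.2⟩

end Degrees

section Cherry

variable {N N' : Network} {x y p q : ℕ}

/-- In-arcs at the suppressed vertex move to its parent and out-arcs to its child, so each new
neighbourhood is an injective image of the old one. -/
lemma cherry_degrees {V : Finset ℕ} {A : ℕ → ℕ → Bool} {v : ℕ} (hx : IsLeaf N x)
    (hy : IsLeaf N y) (hxy : x ≠ y) (hpx : N.arc p x = true) (hpy : N.arc p y = true)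
    (hqp : N.arc q p = true) (hV : V = (N.verts.erase x).erase p)
    (hA : ∀ a b : ℕ, A a b = true ↔
      (N.arc a b = true ∧ a ≠ p ∧ b ≠ p ∧ b ≠ x) ∨ (a = q ∧ b = y))
    (hv : v ∈ V) :
    (V.filter (A · v = true)).card = inDeg N v ∧ (V.filter (A v · = true)).card = outDeg N v := by
  classical
  have hp := isTreeVert_of_arc_of_arc hpx hpy hxy
  have hpch := fun w => eq_or_eq_of_outDeg_eq_two hp.2.2 hpx hpy hxy (w := w)
  have hppar := fun u => eq_of_arc_of_inDeg_eq_one hp.2.1 hqp (w := u)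
  have hxpar := fun u => eq_of_arc_of_inDeg_eq_one hx.2.1 hpx (w := u)
  have hypar := fun u => eq_of_arc_of_inDeg_eq_one hy.2.1 hpy (w := u)
  have hxout := fun w => hx.arc_eq_false (w := w)
  have hqx : q ≠ x := by rintro rfl; simp [hxout] at hqp
  have := mem_verts_of_arc_left hqp
  have := hy.1
  have := ne_of_arc hqp
  have := ne_of_arc hpy
  simp only [hV, Finset.mem_erase] at hv
  constructor
  · have e : V.filter (A · v = true) =
        (N.verts.filter (N.arc · v = true)).image (fun u => if u = p then q else u) := by
      ext u
      simp only [hV, Finset.mem_filter, Finset.mem_erase, hA, Finset.mem_image]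
      grind [mem_verts_of_arc_left]
    rw [e, Finset.card_image_of_injOn]
    · rfl
    · intro a ha b hb hab
      simp only [Finset.mem_coe, Finset.mem_filter] at ha hb
      grind
  · have e : V.filter (A v · = true) =
        (N.verts.filter (N.arc v · = true)).image (fun w => if w = p then y else w) := by
      ext w
      simp only [hV, Finset.mem_filter, Finset.mem_erase, hA, Finset.mem_image]
      grind [mem_verts_of_arc_right]
    rw [e, Finset.card_image_of_injOn]
    · rfl
    · intro a ha b hb hab
      simp only [Finset.mem_coe, Finset.mem_filter] at ha hb
      grind

lemma exists_reducesCherry (hx : IsLeaf N x) (hy : IsLeaf N y) (hxy : x ≠ y)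
    (hpx : N.arc p x = true) (hpy : N.arc p y = true) : ∃ N', ReducesCherry N N' x y := by
  classical
  have hp := isTreeVert_of_arc_of_arc hpx hpy hxy
  obtain ⟨q, hqp⟩ := exists_parent hp.1 hp.ne_root
  set A : ℕ → ℕ → Bool := fun a b =>
    decide ((N.arc a b = true ∧ a ≠ p ∧ b ≠ p ∧ b ≠ x) ∨ (a = q ∧ b = y))
  have hA : ∀ a b, A a b = true ↔ (N.arc a b = true ∧ a ≠ p ∧ b ≠ p ∧ b ≠ x) ∨ (a = q ∧ b = y) :=
    fun a b => decide_eq_true_iff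
  have hdeg := fun v => cherry_degrees (v := v) hx hy hxy hpx hpy hqp rfl hA
  have hqx : q ≠ x := by rintro rfl; simp [hx.arc_eq_false] at hqp
  refine ⟨N.ofDegrees ((N.verts.erase x).erase p) A ?_ ?_ ?_ ?_ (fun v hv => (hdeg v hv).1)
    (fun v hv => (hdeg v hv).2), p, q, hx, hy, hxy, hpx, hpy, hqp, rfl, rfl, hA⟩
  · exact (Finset.erase_subset _ _).trans (Finset.erase_subset _ _)
  · simp only [Finset.mem_erase]
    exact ⟨hp.ne_root.symm, (ne_root_of_arc hpx).symm, N.root_mem⟩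
  · intro a b hab
    have := mem_verts_of_arc_left hqp
    have := hy.1
    have := ne_of_arc hqp
    have := ne_of_arc hpy
    simp only [Finset.mem_erase]
    rcases (hA a b).1 hab with ⟨h, hap, hbp, hbx⟩ | ⟨rfl, rfl⟩
    · have hax : a ≠ x := by rintro rfl; simp [hx.arc_eq_false] at h
      exact ⟨⟨hap, hax, mem_verts_of_arc_left h⟩, hbp, hbx, mem_verts_of_arc_right h⟩
    · grind
  · intro a b hab
    rcases (hA a b).1 hab with ⟨h, -⟩ | ⟨rfl, rfl⟩
    · exact .single h
    · exact .tail (.single hqp) hpy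

namespace ReducesCherry

lemma preservesDegrees (h : ReducesCherry N N' x y) : PreservesDegrees N N' := by
  obtain ⟨p, q, hx, hy, hxy, hpx, hpy, hqp, hV, -, hA⟩ := h
  intro v hv
  have hdeg := cherry_degrees hx hy hxy hpx hpy hqp hV hA hv
  exact ⟨by rw [hV] at hv; exact Finset.mem_of_mem_erase (Finset.mem_of_mem_erase hv),
    hdeg.1, hdeg.2⟩

lemma transGen (h : ReducesCherry N N' x y) {a b : ℕ}
    (hab : TransGen (fun u w : ℕ => N'.arc u w = true) a b) :
    TransGen (fun u w : ℕ => N.arc u w = true) a b := by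
  obtain ⟨p, q, -, -, -, -, hpy, hqp, -, -, hA⟩ := h
  refine TransGen.closed (fun u w huw => ?_) a b hab
  rcases (hA u w).1 huw with ⟨h, -⟩ | ⟨rfl, rfl⟩
  · exact .single h
  · exact .tail (.single hqp) hpy

lemma card_lt (h : ReducesCherry N N' x y) : N'.verts.card < N.verts.card := by
  obtain ⟨p, q, hx, -, -, hpx, -, -, hV, -, -⟩ := h
  rw [hV]
  exact (Finset.card_erase_le).trans_lt (Finset.card_erase_lt_of_mem hx.1)

lemma hasLeafSibling (h : ReducesCherry N N' x y) {v : ℕ} (hv : IsRet N' v)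
    (hs : HasLeafSibling N v) : HasLeafSibling N' v := by
  have hdeg := h.preservesDegrees
  obtain ⟨p, q, hx, hy, hxy, hpx, hpy, -, hV, -, hA⟩ := h
  obtain ⟨p', c, hp'v, hp'c, hcv, hc⟩ := hs
  have hvN := hdeg.isRet hv
  have hpch := fun w => eq_or_eq_of_outDeg_eq_two (isTreeVert_of_arc_of_arc hpx hpy hxy).2.2
    hpx hpy hxy (w := w)
  have hxpar := fun u => eq_of_arc_of_inDeg_eq_one hx.2.1 hpx (w := u)
  have hvV := hv.1
  simp only [hV, Finset.mem_erase] at hvV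
  have hp'p : p' ≠ p := by
    rintro rfl
    rcases hpch v hp'v with rfl | rfl
    exacts [hvV.2.1 rfl, hvN.not_isLeaf hy]
  have hcx : c ≠ x := by rintro rfl; exact hp'p (hxpar p' hp'c).symm
  have hcp : c ≠ p := by rintro rfl; simp [hc.arc_eq_false] at hpx
  have hcV : c ∈ N'.verts := by simp only [hV, Finset.mem_erase]; exact ⟨hcp, hcx, hc.1⟩
  exact ⟨p', c, (hA p' v).2 (.inl ⟨hp'v, hp'p, hvV.1, hvV.2.1⟩),
    (hA p' c).2 (.inl ⟨hp'c, hp'p, hcp, hcx⟩), hcv, hdeg.isLeaf hc hcV⟩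

end ReducesCherry

end Cherry

section RetCherry

variable {N N' : Network} {x y px py z q : ℕ}

lemma retCherry_degrees {V : Finset ℕ} {A : ℕ → ℕ → Bool} {v : ℕ} (hx : IsLeaf N x)
    (hy : IsLeaf N y) (hpx : IsRet N px) (hpxx : N.arc px x = true)
    (hpypx : N.arc py px = true) (hpyy : N.arc py y = true) (hz : N.arc z px = true)
    (hzpy : z ≠ py) (hq : N.arc q py = true) (hV : V = (N.verts.erase px).erase py)
    (hA : ∀ a b : ℕ, A a b = true ↔
      (N.arc a b = true ∧ a ≠ px ∧ a ≠ py ∧ b ≠ px ∧ b ≠ py) ∨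
        (a = z ∧ b = x) ∨ (a = q ∧ b = y))
    (hv : v ∈ V) :
    (V.filter (A · v = true)).card = inDeg N v ∧ (V.filter (A v · = true)).card = outDeg N v := by
  classical
  have hpxy : px ≠ y := fun h => hpx.not_isLeaf (h ▸ hy)
  have hpy := isTreeVert_of_arc_of_arc hpypx hpyy hpxy
  have hpxpar := fun u => eq_or_eq_of_inDeg_eq_two hpx.2 hpypx hz hzpy.symm (u := u)
  have hpxch := fun w => eq_of_arc_of_outDeg_eq_one hpx.outDeg_eq_one hpxx (w := w)
  have hpych := fun w => eq_or_eq_of_outDeg_eq_two hpy.2.2 hpypx hpyy hpxy (w := w)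
  have hpypar := fun u => eq_of_arc_of_inDeg_eq_one hpy.2.1 hq (w := u)
  have hxpar := fun u => eq_of_arc_of_inDeg_eq_one hx.2.1 hpxx (w := u)
  have hypar := fun u => eq_of_arc_of_inDeg_eq_one hy.2.1 hpyy (w := u)
  have hxout := fun w => hx.arc_eq_false (w := w)
  have hyout := fun w => hy.arc_eq_false (w := w)
  have := hx.1; have := hy.1
  have := mem_verts_of_arc_left hz; have := mem_verts_of_arc_left hq
  have := ne_of_arc hpxx; have := ne_of_arc hpypx; have := ne_of_arc hpyy
  have := ne_of_arc hz; have := ne_of_arc hq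
  simp only [hV, Finset.mem_erase] at hv
  constructor
  · have e : V.filter (A · v = true) = (N.verts.filter (N.arc · v = true)).image
        (fun u => if u = px then z else if u = py then q else u) := by
      ext u
      simp only [hV, Finset.mem_filter, Finset.mem_erase, hA, Finset.mem_image]
      grind [mem_verts_of_arc_left]
    rw [e, Finset.card_image_of_injOn]
    · rfl
    · intro a ha b hb hab
      simp only [Finset.mem_coe, Finset.mem_filter] at ha hb
      grind
  · have e : V.filter (A v · = true) = (N.verts.filter (N.arc v · = true)).image
        (fun w => if w = px then x else if w = py then y else w) := by
      ext w
      simp only [hV, Finset.mem_filter, Finset.mem_erase, hA, Finset.mem_image]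
      grind [mem_verts_of_arc_right]
    rw [e, Finset.card_image_of_injOn]
    · rfl
    · intro a ha b hb hab
      simp only [Finset.mem_coe, Finset.mem_filter] at ha hb
      grind

lemma exists_reducesRetCherry {v c p : ℕ} (hv : IsRet N v) (hvx : N.arc v x = true)
    (hx : IsLeaf N x) (hpv : N.arc p v = true) (hpc : N.arc p c = true) (hcv : c ≠ v)
    (hc : IsLeaf N c) : ∃ N', ReducesRetCherry N N' x c := by
  classical
  have hp := isTreeVert_of_arc_of_arc hpv hpc hcv.symm
  obtain ⟨z, hzv, hzp⟩ := exists_arc_ne_of_one_lt_inDeg (by rw [hv.2]; omega) p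
  obtain ⟨q, hqp⟩ := exists_parent hp.1 hp.ne_root
  set A : ℕ → ℕ → Bool := fun a b => decide ((N.arc a b = true ∧ a ≠ v ∧ a ≠ p ∧ b ≠ v ∧ b ≠ p) ∨
    (a = z ∧ b = x) ∨ (a = q ∧ b = c))
  have hA : ∀ a b, A a b = true ↔ (N.arc a b = true ∧ a ≠ v ∧ a ≠ p ∧ b ≠ v ∧ b ≠ p) ∨
      (a = z ∧ b = x) ∨ (a = q ∧ b = c) :=
    fun a b => decide_eq_true_iff
  have hdeg := fun u => retCherry_degrees (v := u) hx hc hv hvx hpv hpc hzv hzp hqp rfl hA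
  refine ⟨N.ofDegrees ((N.verts.erase v).erase p) A ?_ ?_ ?_ ?_ (fun u hu => (hdeg u hu).1)
    (fun u hu => (hdeg u hu).2), v, p, z, q, hx, hc, hv, hvx, hpv, hpc, hzv, hzp, hqp,
    rfl, rfl, hA⟩
  · exact (Finset.erase_subset _ _).trans (Finset.erase_subset _ _)
  · simp only [Finset.mem_erase]
    exact ⟨hp.ne_root.symm, hv.ne_root.symm, N.root_mem⟩
  · intro a b hab
    have := hx.1; have := hc.1
    have := mem_verts_of_arc_left hzv; have := mem_verts_of_arc_left hqp
    have := ne_of_arc hvx; have := ne_of_arc hpv; have := ne_of_arc hpc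
    have := ne_of_arc hzv; have := ne_of_arc hqp
    have hxp : x ≠ p := by rintro rfl; simp [hx.arc_eq_false] at hpv
    have hqv : q ≠ v := by rintro rfl; exact N.acyclic q (.tail (.single hqp) hpv)
    simp only [Finset.mem_erase]
    rcases (hA a b).1 hab with ⟨h, hav, hap, hbv, hbp⟩ | ⟨rfl, rfl⟩ | ⟨rfl, rfl⟩
    · exact ⟨⟨hap, hav, mem_verts_of_arc_left h⟩, hbp, hbv, mem_verts_of_arc_right h⟩
    · grind
    · grind
  · intro a b hab
    rcases (hA a b).1 hab with ⟨h, -⟩ | ⟨rfl, rfl⟩ | ⟨rfl, rfl⟩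
    · exact .single h
    · exact .tail (.single hzv) hvx
    · exact .tail (.single hqp) hpc

namespace ReducesRetCherry

lemma preservesDegrees (h : ReducesRetCherry N N' x y) : PreservesDegrees N N' := by
  obtain ⟨px, py, z, q, hx, hy, hpx, hpxx, hpypx, hpyy, hz, hzpy, hq, hV, -, hA⟩ := h
  intro v hv
  have hdeg := retCherry_degrees hx hy hpx hpxx hpypx hpyy hz hzpy hq hV hA hv
  exact ⟨by rw [hV] at hv; exact Finset.mem_of_mem_erase (Finset.mem_of_mem_erase hv),
    hdeg.1, hdeg.2⟩

lemma transGen (h : ReducesRetCherry N N' x y) {a b : ℕ}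
    (hab : TransGen (fun u w : ℕ => N'.arc u w = true) a b) :
    TransGen (fun u w : ℕ => N.arc u w = true) a b := by
  obtain ⟨px, py, z, q, -, -, -, hpxx, -, hpyy, hz, -, hq, -, -, hA⟩ := h
  refine TransGen.closed (fun u w huw => ?_) a b hab
  rcases (hA u w).1 huw with ⟨h, -⟩ | ⟨rfl, rfl⟩ | ⟨rfl, rfl⟩
  · exact .single h
  · exact .tail (.single hz) hpxx
  · exact .tail (.single hq) hpyy

lemma card_lt (h : ReducesRetCherry N N' x y) : N'.verts.card < N.verts.card := by
  obtain ⟨px, py, z, q, -, -, hpx, -, -, -, -, -, -, hV, -, -⟩ := h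
  rw [hV]
  exact (Finset.card_erase_le).trans_lt (Finset.card_erase_lt_of_mem hpx.1)

lemma hasLeafSibling (h : ReducesRetCherry N N' x y) {v : ℕ} (hv : IsRet N' v)
    (hs : HasLeafSibling N v) : HasLeafSibling N' v := by
  have hdeg := h.preservesDegrees
  obtain ⟨px, py, z, q, hx, hy, hpx, hpxx, hpypx, hpyy, -, -, -, hV, -, hA⟩ := h
  obtain ⟨p', c, hp'v, hp'c, hcv, hc⟩ := hs
  have hvN := hdeg.isRet hv
  have hpxy : px ≠ y := fun h => hpx.not_isLeaf (h ▸ hy)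
  have hpych := fun w => eq_or_eq_of_outDeg_eq_two
    (isTreeVert_of_arc_of_arc hpypx hpyy hpxy).2.2 hpypx hpyy hpxy (w := w)
  have hvV := hv.1
  simp only [hV, Finset.mem_erase] at hvV
  have hp'px : p' ≠ px := by
    rintro rfl
    exact hvN.not_isLeaf (eq_of_arc_of_outDeg_eq_one hpx.outDeg_eq_one hpxx hp'v ▸ hx)
  have hp'py : p' ≠ py := by
    rintro rfl
    rcases hpych v hp'v with rfl | rfl
    exacts [hvV.2.1 rfl, hvN.not_isLeaf hy]
  have hcpx : c ≠ px := by rintro rfl; exact hpx.not_isLeaf hc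
  have hcpy : c ≠ py := by rintro rfl; simp [hc.arc_eq_false] at hpyy
  have hcV : c ∈ N'.verts := by simp only [hV, Finset.mem_erase]; exact ⟨hcpy, hcpx, hc.1⟩
  exact ⟨p', c, (hA p' v).2 (.inl ⟨hp'v, hp'px, hp'py, hvV.2.1, hvV.1⟩),
    (hA p' c).2 (.inl ⟨hp'c, hp'px, hp'py, hcpx, hcpy⟩), hcv, hdeg.isLeaf hc hcV⟩

end ReducesRetCherry

end RetCherry

section Orchard

variable {N N' : Network} {r : ℕ}

namespace CherryStep

lemma card_lt (h : CherryStep N N') : N'.verts.card < N.verts.card := by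
  obtain ⟨x, y, h | h⟩ := h
  exacts [h.card_lt, h.card_lt]

lemma retsHaveLeafSiblingsExcept (h : CherryStep N N') (hI : RetsHaveLeafSiblingsExcept N r) :
    RetsHaveLeafSiblingsExcept N' r := by
  obtain ⟨hdeg, htrans, hsib⟩ : PreservesDegrees N N' ∧
      (∀ a b, TransGen (fun u w : ℕ => N'.arc u w = true) a b →
        TransGen (fun u w : ℕ => N.arc u w = true) a b) ∧
      ∀ v, IsRet N' v → HasLeafSibling N v → HasLeafSibling N' v := by
    obtain ⟨x, y, h | h⟩ := h
    exacts [⟨h.preservesDegrees, fun _ _ => h.transGen, fun _ => h.hasLeafSibling⟩,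
      ⟨h.preservesDegrees, fun _ _ => h.transGen, fun _ => h.hasLeafSibling⟩]
  intro v hv hvr
  obtain ⟨hnot, hs⟩ := hI v (hdeg.isRet hv) hvr
  exact ⟨fun hvr' => hnot (htrans v r hvr'), hsib v hv hs⟩

end CherryStep

open Classical in
noncomputable def descendants (N : Network) (v : ℕ) : Finset ℕ :=
  N.verts.filter (TransGen (fun a b : ℕ => N.arc a b = true) v ·)

lemma card_descendants_lt {v w : ℕ} (h : N.arc v w = true) :
    (descendants N w).card < (descendants N v).card := by
  classical
  refine Finset.card_lt_card ⟨fun u hu => ?_, fun hsub => ?_⟩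
  · simp only [descendants, Finset.mem_filter] at hu ⊢
    exact ⟨hu.1, .head h hu.2⟩
  · have hw : w ∈ descendants N v := by
      simp only [descendants, Finset.mem_filter]
      exact ⟨mem_verts_of_arc_right h, .single h⟩
    exact N.acyclic w (Finset.mem_filter.1 (hsub hw)).2

lemma isLeaf_or_isInternal_of_arc {v w : ℕ} (h : N.arc v w = true) :
    IsLeaf N w ∨ IsInternal N w := by
  by_cases hw : IsLeaf N w
  exacts [.inl hw, .inr ⟨mem_verts_of_arc_right h, ne_root_of_arc h, hw⟩]

lemma exists_lowest_internal (P : ℕ → Prop) {v : ℕ} (hv : IsInternal N v) (hP : P v) :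
    ∃ u, IsInternal N u ∧ P u ∧ ∀ w, N.arc u w = true → IsLeaf N w ∨ ¬ P w := by
  classical
  obtain ⟨u, hu, hmin⟩ := Finset.exists_min_image
    (N.verts.filter fun u => IsInternal N u ∧ P u) (fun u => (descendants N u).card)
    ⟨v, Finset.mem_filter.2 ⟨hv.1, hv, hP⟩⟩
  obtain ⟨-, hu, hPu⟩ := Finset.mem_filter.1 hu
  refine ⟨u, hu, hPu, fun w hw => ?_⟩
  refine (isLeaf_or_isInternal_of_arc hw).imp_right fun hwi hPw => ?_
  have := hmin w (Finset.mem_filter.2 ⟨hwi.1, hwi, hPw⟩)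
  have := card_descendants_lt hw
  omega

lemma exists_isInternal (h : 2 < N.verts.card) : ∃ v, IsInternal N v := by
  obtain ⟨c, hc⟩ := exists_root_child N
  rcases isLeaf_or_isInternal_of_arc hc with hcl | hci
  · obtain ⟨w, hw, hwc⟩ : ∃ w ∈ N.verts, w ∉ ({N.root, c} : Finset ℕ) :=
      Finset.exists_mem_notMem_of_card_lt_card ((Finset.card_le_two).trans_lt h)
    simp only [Finset.mem_insert, Finset.mem_singleton, not_or] at hwc
    obtain ⟨u, hu⟩ := exists_parent hw hwc.1
    have hur : u ≠ N.root := by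
      rintro rfl; exact hwc.2 (eq_of_arc_of_outDeg_eq_one outDeg_root hu hc)
    exact ⟨u, mem_verts_of_arc_left hu, hur, fun hul => by simp [hul.arc_eq_false] at hu⟩
  · exact ⟨c, hci⟩

lemma IsInternal.isRet_of_not_hasCherry {v : ℕ} (hno : ¬ HasCherry N) (hv : IsInternal N v)
    (hch : ∀ w, N.arc v w = true → IsLeaf N w) :
    IsRet N v ∧ ∃ x, N.arc v x = true ∧ IsLeaf N x := by
  have hcases := inDeg_outDeg_cases hv.1 hv.2.1
  have hpos : 0 < outDeg N v := Nat.pos_of_ne_zero fun h0 => hv.2.2 ⟨hv.1, by omega, h0⟩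
  obtain ⟨x, hx⟩ := Finset.card_pos.1 hpos
  have hx := mem_filter_arc_right.1 hx
  refine ⟨⟨hv.1, ?_⟩, x, hx, hch x hx⟩
  rcases hcases with h | h | h
  · obtain ⟨y, hy, hyx⟩ := exists_arc_ne_of_one_lt_outDeg (N := N) (v := v) (by omega) x
    exact absurd ⟨v, y, x, hyx, hy, hx, hch y hy, hch x hx⟩ hno
  · exact h.1
  · have := outDeg_pos hx; omega

lemma hasLeafSibling_of_forall_isRet_eq (hno : ¬ HasCherry N) (hr : IsRet N r)
    (huniq : ∀ v, IsRet N v → v = r) : HasLeafSibling N r := by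
  obtain ⟨u₁, hu₁⟩ := exists_parent hr.1 hr.ne_root
  obtain ⟨u₂, hu₂, hu₂₁⟩ := exists_arc_ne_of_one_lt_inDeg (by rw [hr.2]; omega) u₁
  obtain ⟨u, hur, hu⟩ : ∃ u, N.arc u r = true ∧ u ≠ N.root := by
    by_cases h : u₁ = N.root
    exacts [⟨u₂, hu₂, h ▸ hu₂₁⟩, ⟨u₁, hu₁, h⟩]
  obtain ⟨m, hm, hmr, hmch⟩ := exists_lowest_internal (· ≠ r)
    ⟨mem_verts_of_arc_left hur, hu, fun hl => by simp [hl.arc_eq_false] at hur⟩ (ne_of_arc hur)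
  simp only [ne_eq, not_not] at hmch
  have hmt : outDeg N m = 2 := by
    rcases inDeg_outDeg_cases hm.1 hm.2.1 with h | h | h
    · exact h.2
    · exact absurd (huniq m ⟨hm.1, h.1⟩) hmr
    · exact absurd ⟨hm.1, h.1, h.2⟩ hm.2.2
  obtain ⟨a, ha⟩ := Finset.card_pos.1 (by omega : 0 < outDeg N m)
  have ha := mem_filter_arc_right.1 ha
  obtain ⟨b, hb, hba⟩ := exists_arc_ne_of_one_lt_outDeg (N := N) (v := m) (by omega) a
  rcases hmch a ha with hal | rfl <;> rcases hmch b hb with hbl | rfl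
  · exact absurd ⟨m, b, a, hba, hb, ha, hbl, hal⟩ hno
  · exact ⟨m, a, hb, ha, hba.symm, hal⟩
  · exact ⟨m, b, ha, hb, hba, hbl⟩
  · exact absurd rfl hba

lemma exists_cherryStep (hI : RetsHaveLeafSiblingsExcept N r) (hcard : 2 < N.verts.card) :
    ∃ N', CherryStep N N' := by
  by_cases hc : HasCherry N
  · obtain ⟨p, x, y, hxy, hpx, hpy, hx, hy⟩ := hc
    obtain ⟨N', h⟩ := exists_reducesCherry hx hy hxy hpx hpy
    exact ⟨N', x, y, .inl h⟩
  obtain ⟨v, hv, ⟨x, hvx, hx⟩, p, c, hpv, hpc, hcv, hcl⟩ :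
      ∃ v, IsRet N v ∧ (∃ x, N.arc v x = true ∧ IsLeaf N x) ∧ HasLeafSibling N v := by
    by_cases hex : ∃ r', IsRet N r' ∧ r' ≠ r
    · obtain ⟨r', hr', hr'r⟩ := hex
      obtain ⟨v, hvi, hr'v, hch⟩ := exists_lowest_internal (ReflTransGen (N.arc · · = true) r')
        ⟨hr'.1, hr'.ne_root, hr'.not_isLeaf⟩ .refl
      obtain ⟨hv, hleaf⟩ := hvi.isRet_of_not_hasCherry hc fun w hw =>
        (hch w hw).resolve_right (not_not.2 (hr'v.tail hw))
      have hvr : v ≠ r := by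
        rintro rfl
        exact (hI r' hr' hr'r).1 ((reflTransGen_iff_eq_or_transGen.1 hr'v).resolve_left hr'r.symm)
      exact ⟨v, hv, hleaf, (hI v hv hvr).2⟩
    · have huniq : ∀ v, IsRet N v → v = r := fun v hv => by_contra fun hvr => hex ⟨v, hv, hvr⟩
      obtain ⟨v₀, hv₀⟩ := exists_isInternal hcard
      obtain ⟨v, hvi, -, hch⟩ := exists_lowest_internal (fun _ => True) hv₀ trivial
      obtain ⟨hv, hleaf⟩ := hvi.isRet_of_not_hasCherry hc fun w hw =>
        (hch w hw).resolve_right (not_not.2 trivial)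
      obtain rfl := huniq v hv
      exact ⟨v, hv, hleaf, hasLeafSibling_of_forall_isRet_eq hc hv huniq⟩
  obtain ⟨N', h⟩ := exists_reducesRetCherry hv hvx hx hpv hpc hcv hcl
  exact ⟨N', x, c, .inr h⟩

lemma isSingleLeaf_of_card_le_two (h : N.verts.card ≤ 2) : IsSingleLeaf N := by
  obtain ⟨c, hc⟩ := exists_root_child N
  have hcr := ne_root_of_arc hc
  refine ⟨c, hcr, (Finset.eq_of_subset_of_card_le (fun w hw => ?_) ?_).symm⟩
  · simp only [Finset.mem_insert, Finset.mem_singleton] at hw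
    rcases hw with rfl | rfl
    exacts [N.root_mem, mem_verts_of_arc_right hc]
  · rw [Finset.card_pair hcr.symm]; exact h

lemma RetsHaveLeafSiblingsExcept.isOrchard (hI : RetsHaveLeafSiblingsExcept N r) :
    IsOrchard N := by
  induction hn : N.verts.card using Nat.strong_induction_on generalizing N with
  | _ n ih =>
    by_cases hcard : 2 < N.verts.card
    · obtain ⟨N', hstep⟩ := exists_cherryStep hI hcard
      obtain ⟨N'', hred, hleaf⟩ :=
        ih _ (hn ▸ hstep.card_lt) (hstep.retsHaveLeafSiblingsExcept hI) rfl
      exact ⟨N'', .head hstep hred, hleaf⟩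
    · exact ⟨N, .refl, isSingleLeaf_of_card_le_two (by omega)⟩

end Orchard

theorem highestRet_leafSiblings_orchard_general (N : Network) (r : ℕ)
    (hhigh : ∀ a : ℕ, IsRet N a →
      ¬ Relation.TransGen (fun x y : ℕ => N.arc x y = true) a r)
    (hsib : ∀ r' : ℕ, IsRet N r' → r' ≠ r →
      ∃ p c : ℕ, N.arc p r' = true ∧ N.arc p c = true ∧ c ≠ r' ∧ IsLeaf N c) :
    IsOrchard N :=
  RetsHaveLeafSiblingsExcept.isOrchard (r := r) fun r' hr' hne => ⟨hhigh r' hr', hsib r' hr' hne⟩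

/-- If `N` has a highest reticulation `r` (no reticulation is an
ancestor of it) such that every other reticulation has a leaf sibling, then `N`
is orchard. -/
theorem highestRet_leafSiblings_orchard (N : Network) (r : ℕ)
    (hr : IsRet N r)
    (hhigh : ∀ a : ℕ, IsRet N a →
      ¬ Relation.TransGen (fun x y : ℕ => N.arc x y = true) a r)
    (hsib : ∀ r' : ℕ, IsRet N r' → r' ≠ r →
      ∃ p c : ℕ, N.arc p r' = true ∧ N.arc p c = true ∧ c ≠ r' ∧ IsLeaf N c) :
    IsOrchard N :=
  highestRet_leafSiblings_orchard_general N r hhigh hsib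

end PhyloNet
end
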